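/- Let p and p̃ be probability distributions on ℝ^d with finite second moments and covariance matrices Σ and Σ̃ respectively. If the 2-Wasserstein distance satisfies W₂(p, p̃) ≤ η with 0 < η < √(‖Σ‖/2) (spectral norm), then ‖Σ − Σ̃‖ ≤ (2√2·η·‖Σ‖^{1/2} + η²(√2+1)) · ‖Σ‖^{1/2}/(‖Σ‖^{1/2} − √2·η). -/

import Mathlib

open MeasureTheory
open scoped Matrix.Norms.L2Operator

/-- The mean vector of a probability measure on `ℝ^d`. -/
noncomputable def measureMean {d : ℕ} (p : Measure (EuclideanSpace ℝ (Fin d))) (i : Fin d) : ℝ :=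
  ∫ x, x i ∂p

/-- The covariance matrix of a probability measure on `ℝ^d`. -/
noncomputable def covMatrix {d : ℕ} (p : Measure (EuclideanSpace ℝ (Fin d))) :
    Matrix (Fin d) (Fin d) ℝ :=
  Matrix.of fun i j => ∫ x, (x i - measureMean p i) * (x j - measureMean p j) ∂p

/-- The 2-Wasserstein distance between two measures on `ℝ^d` (Euclidean metric), defined as the
infimum over couplings of the square root of the second-moment transport cost. -/
noncomputable def W2 {d : ℕ} (p q : Measure (EuclideanSpace ℝ (Fin d))) : ℝ :=
  sInf { r : ℝ | 0 ≤ r ∧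
    ∃ π : Measure (EuclideanSpace ℝ (Fin d) × EuclideanSpace ℝ (Fin d)),
      π.map Prod.fst = p ∧ π.map Prod.snd = q ∧
      (∫ z, ‖z.1 - z.2‖ ^ 2 ∂π) = r ^ 2 }

/-! In a direction `u`, the quadratic form `uᵀ Σ u` is the variance of `⟪u, X⟫` for `X ~ p`.
Couple `X ~ p` and `Y ~ p̃` with transport cost `r²` and put `D = X - Y`; then
`Var ⟪u, Y⟫ = Var ⟪u, X⟫ - 2 Cov(⟪u, X⟫, ⟪u, D⟫) + Var ⟪u, D⟫`, and Cauchy–Schwarz together with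
`Var ⟪u, D⟫ ≤ ‖u‖² r²` bounds the quadratic form of the symmetric matrix `Σ - Σ̃` by
`(2 r ‖Σ‖^{1/2} + r²) ‖u‖²`, hence also its spectral norm. Letting `r` decrease to `W₂(p, p̃)`
gives `‖Σ - Σ̃‖ ≤ 2 η ‖Σ‖^{1/2} + η²`, which is below the stated bound. -/

open ProbabilityTheory
open scoped RealInnerProductSpace

namespace ContinuousLinearMap

variable {E : Type*} [NormedAddCommGroup E] [InnerProductSpace ℝ E]

lemma opNorm_le_of_abs_inner_self_le {T : E →L[ℝ] E} (hT : (T : E →ₗ[ℝ] E).IsSymmetric)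
    {C : ℝ} (hC : 0 ≤ C) (h : ∀ x, |⟪T x, x⟫| ≤ C * ‖x‖ ^ 2) : ‖T‖ ≤ C := by
  rw [T.norm_eq_iSup_rayleighQuotient hT]
  refine ciSup_le fun x ↦ ?_
  rcases eq_or_ne x 0 with rfl | hx
  · simpa using hC
  · rw [rayleighQuotient, reApplyInnerSelf_apply, RCLike.re_to_real, abs_div, abs_sq,
      div_le_iff₀ (by positivity)]
    exact h x

end ContinuousLinearMap

namespace ProbabilityTheory

variable {Ω : Type*} [MeasurableSpace Ω] {μ : Measure Ω} {X Y : Ω → ℝ}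

lemma covariance_sq_le_variance_mul_variance [IsFiniteMeasure μ] (hX : MemLp X 2 μ)
    (hY : MemLp Y 2 μ) : cov[X, Y; μ] ^ 2 ≤ Var[X; μ] * Var[Y; μ] := by
  have hquad : ∀ t : ℝ, 0 ≤ Var[Y; μ] * (t * t) + 2 * cov[X, Y; μ] * t + Var[X; μ] := by
    intro t
    have h := variance_add hX (hY.const_mul t)
    rw [covariance_const_mul_right, variance_const_mul] at h
    linarith [variance_nonneg (X + fun ω ↦ t * Y ω) μ]
  have := discrim_le_zero hquad
  rw [discrim] at this
  linarith

lemma abs_variance_sub_variance_le [IsFiniteMeasure μ] (hX : MemLp X 2 μ) (hY : MemLp Y 2 μ) :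
    |Var[X; μ] - Var[Y; μ]| ≤ 2 * √Var[X; μ] * √Var[X - Y; μ] + Var[X - Y; μ] := by
  have hD := hX.sub hY
  have hY' : Var[Y; μ] = Var[X; μ] - 2 * cov[X, X - Y; μ] + Var[X - Y; μ] := by
    simpa using variance_sub hX hD
  have hcov : |cov[X, X - Y; μ]| ≤ √Var[X; μ] * √Var[X - Y; μ] := by
    rw [← Real.sqrt_mul (variance_nonneg _ _)]
    exact Real.abs_le_sqrt (covariance_sq_le_variance_mul_variance hX hD)
  rw [hY', abs_le]
  constructor <;> linarith [abs_le.mp hcov, variance_nonneg (X - Y) μ]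

variable {E : Type*} [NormedAddCommGroup E] [InnerProductSpace ℝ E] [MeasurableSpace E]
  [BorelSpace E]

lemma abs_variance_inner_sub_le_of_coupling {π : Measure (E × E)}
    [IsProbabilityMeasure (π.map Prod.fst)] (hp : MemLp id 2 (π.map Prod.fst))
    (hq : MemLp id 2 (π.map Prod.snd)) (u : E) :
    |Var[fun x ↦ ⟪u, x⟫; π.map Prod.fst] - Var[fun x ↦ ⟪u, x⟫; π.map Prod.snd]| ≤
      2 * √Var[fun x ↦ ⟪u, x⟫; π.map Prod.fst] * (‖u‖ * √(∫ z, ‖z.1 - z.2‖ ^ 2 ∂π)) +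
        ‖u‖ ^ 2 * ∫ z, ‖z.1 - z.2‖ ^ 2 ∂π := by
  have : IsProbabilityMeasure π :=
    (Measure.isProbabilityMeasure_map_iff measurable_fst.aemeasurable).mp inferInstance
  have hX : MemLp (fun z : E × E ↦ z.1) 2 π :=
    (memLp_map_measure_iff hp.1 measurable_fst.aemeasurable).mp hp
  have hY : MemLp (fun z : E × E ↦ z.2) 2 π :=
    (memLp_map_measure_iff hq.1 measurable_snd.aemeasurable).mp hq
  have hcost : ∫ z, ⟪u, z.1 - z.2⟫ ^ 2 ∂π ≤ ‖u‖ ^ 2 * ∫ z, ‖z.1 - z.2‖ ^ 2 ∂π := by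
    rw [← integral_const_mul]
    refine integral_mono ((hX.sub hY).const_inner u).integrable_sq
      ((hX.sub hY).norm.integrable_sq.const_mul _) fun z ↦ ?_
    simpa [mul_pow] using pow_le_pow_left₀ (abs_nonneg _) (abs_real_inner_le_norm u (z.1 - z.2)) 2
  have hvar : Var[(fun z : E × E ↦ ⟪u, z.1⟫) - fun z ↦ ⟪u, z.2⟫; π] ≤
      ‖u‖ ^ 2 * ∫ z, ‖z.1 - z.2‖ ^ 2 ∂π := by
    refine (variance_le_expectation_sq ((hX.const_inner u).sub (hY.const_inner u)).1).trans
      (le_of_eq_of_le ?_ hcost)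
    simp [inner_sub_right]
  rw [variance_map (by fun_prop) measurable_fst.aemeasurable,
    variance_map (by fun_prop) measurable_snd.aemeasurable, Function.comp_def, Function.comp_def]
  refine (abs_variance_sub_variance_le (hX.const_inner u) (hY.const_inner u)).trans ?_
  gcongr
  rw [← Real.sqrt_sq (norm_nonneg u), ← Real.sqrt_mul (sq_nonneg _)]
  exact Real.sqrt_le_sqrt hvar

end ProbabilityTheory

section

variable {d : ℕ} {p q : Measure (EuclideanSpace ℝ (Fin d))}

lemma covMatrix_apply (p : Measure (EuclideanSpace ℝ (Fin d))) (i j : Fin d) :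
    covMatrix p i j = cov[fun x ↦ x i, fun x ↦ x j; p] := rfl

lemma covMatrix_isHermitian (p : Measure (EuclideanSpace ℝ (Fin d))) :
    (covMatrix p).IsHermitian := by
  ext i j
  exact covariance_comm _ _

lemma inner_toEuclideanCLM_covMatrix [IsFiniteMeasure p] (hp : MemLp id 2 p)
    (u : EuclideanSpace ℝ (Fin d)) :
    ⟪u, Matrix.toEuclideanCLM (𝕜 := ℝ) (n := Fin d) (covMatrix p) u⟫ =
      Var[fun x ↦ ⟪u, x⟫; p] := by
  have hmap : p.map (fun x ↦ WithLp.toLp 2 (x ·)) = p := by simp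
  have h := covarianceBilin_apply_pi (μ := p) (X := fun i x ↦ x i) hp.eval_piLp u u
  rw [hmap, covarianceBilin_self hp] at h
  rw [h, Matrix.inner_toEuclideanCLM, Matrix.dotProduct_mulVec]
  simp only [dotProduct, Matrix.vecMul, covMatrix_apply, Finset.sum_mul]
  exact Finset.sum_comm.trans
    (Finset.sum_congr rfl fun i _ ↦ Finset.sum_congr rfl fun j _ ↦ by ring)

lemma variance_inner_le [IsFiniteMeasure p] (hp : MemLp id 2 p) (u : EuclideanSpace ℝ (Fin d)) :
    Var[fun x ↦ ⟪u, x⟫; p] ≤ ‖covMatrix p‖ * ‖u‖ ^ 2 := by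
  rw [← inner_toEuclideanCLM_covMatrix hp]
  calc ⟪u, Matrix.toEuclideanCLM (𝕜 := ℝ) (n := Fin d) (covMatrix p) u⟫
      ≤ ‖u‖ * ‖Matrix.toEuclideanCLM (𝕜 := ℝ) (n := Fin d) (covMatrix p) u‖ :=
        real_inner_le_norm _ _
    _ ≤ ‖u‖ * (‖covMatrix p‖ * ‖u‖) := by gcongr; exact ContinuousLinearMap.le_opNorm _ u
    _ = ‖covMatrix p‖ * ‖u‖ ^ 2 := by ring

lemma norm_covMatrix_sub_le_of_coupling [IsProbabilityMeasure p] [IsFiniteMeasure q]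
    (hp : MemLp id 2 p) (hq : MemLp id 2 q)
    {π : Measure (EuclideanSpace ℝ (Fin d) × EuclideanSpace ℝ (Fin d))}
    (hfst : π.map Prod.fst = p) (hsnd : π.map Prod.snd = q) :
    ‖covMatrix p - covMatrix q‖ ≤
      2 * √‖covMatrix p‖ * √(∫ z, ‖z.1 - z.2‖ ^ 2 ∂π) + ∫ z, ‖z.1 - z.2‖ ^ 2 ∂π := by
  subst hfst hsnd
  set c := ∫ z, ‖z.1 - z.2‖ ^ 2 ∂π
  have hT : (Matrix.toEuclideanCLM (𝕜 := ℝ) (n := Fin d)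
      (covMatrix (π.map Prod.fst) - covMatrix (π.map Prod.snd)) :
        EuclideanSpace ℝ (Fin d) →ₗ[ℝ] EuclideanSpace ℝ (Fin d)).IsSymmetric := by
    rw [Matrix.coe_toEuclideanCLM_eq_toEuclideanLin, Matrix.isSymmetric_toEuclideanLin_iff]
    exact (covMatrix_isHermitian _).sub (covMatrix_isHermitian _)
  refine ContinuousLinearMap.opNorm_le_of_abs_inner_self_le hT (by positivity) fun u ↦ ?_
  have hquad : ⟪Matrix.toEuclideanCLM (𝕜 := ℝ) (n := Fin d)
      (covMatrix (π.map Prod.fst) - covMatrix (π.map Prod.snd)) u, u⟫ =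
      Var[fun x ↦ ⟪u, x⟫; π.map Prod.fst] - Var[fun x ↦ ⟪u, x⟫; π.map Prod.snd] := by
    rw [map_sub, sub_apply, inner_sub_left, real_inner_comm,
      inner_toEuclideanCLM_covMatrix hp, real_inner_comm, inner_toEuclideanCLM_covMatrix hq]
  have hsd : √Var[fun x ↦ ⟪u, x⟫; π.map Prod.fst] ≤ √‖covMatrix (π.map Prod.fst)‖ * ‖u‖ := by
    rw [← Real.sqrt_sq (norm_nonneg u), ← Real.sqrt_mul (norm_nonneg _)]
    exact Real.sqrt_le_sqrt (variance_inner_le hp u)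
  calc _ = _ := congrArg abs hquad
    _ ≤ 2 * √Var[fun x ↦ ⟪u, x⟫; π.map Prod.fst] * (‖u‖ * √c) + ‖u‖ ^ 2 * c :=
      abs_variance_inner_sub_le_of_coupling hp hq u
    _ ≤ 2 * (√‖covMatrix (π.map Prod.fst)‖ * ‖u‖) * (‖u‖ * √c) + ‖u‖ ^ 2 * c := by gcongr
    _ = (2 * √‖covMatrix (π.map Prod.fst)‖ * √c + c) * ‖u‖ ^ 2 := by ring

lemma W2_nonneg (p q : Measure (EuclideanSpace ℝ (Fin d))) : 0 ≤ W2 p q :=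
  Real.sInf_nonneg fun _ hr ↦ hr.1

lemma norm_covMatrix_sub_le_of_W2 [IsProbabilityMeasure p] [IsProbabilityMeasure q]
    (hp : MemLp id 2 p) (hq : MemLp id 2 q) :
    ‖covMatrix p - covMatrix q‖ ≤ 2 * √‖covMatrix p‖ * W2 p q + W2 p q ^ 2 := by
  set s := √‖covMatrix p‖
  have hne : { r : ℝ | 0 ≤ r ∧
      ∃ π : Measure (EuclideanSpace ℝ (Fin d) × EuclideanSpace ℝ (Fin d)),
        π.map Prod.fst = p ∧ π.map Prod.snd = q ∧ (∫ z, ‖z.1 - z.2‖ ^ 2 ∂π) = r ^ 2 }.Nonempty :=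
    ⟨_, Real.sqrt_nonneg _, p.prod q, by simp, by simp,
      (Real.sq_sqrt (integral_nonneg fun _ ↦ sq_nonneg _)).symm⟩
  -- `t ↦ √(t + s ^ 2) - s` inverts `r ↦ 2 s r + r ^ 2 = (s + r) ^ 2 - s ^ 2`.
  have hinv : √(‖covMatrix p - covMatrix q‖ + s ^ 2) - s ≤ W2 p q := by
    refine le_csInf hne fun r ⟨hr, π, hfst, hsnd, hcost⟩ ↦ ?_
    have h := norm_covMatrix_sub_le_of_coupling hp hq hfst hsnd
    rw [hcost, Real.sqrt_sq hr] at h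
    rw [sub_le_iff_le_add, Real.sqrt_le_iff]
    exact ⟨by positivity, by linarith⟩
  have h := (Real.sqrt_le_iff.mp (sub_le_iff_le_add.mp hinv)).2
  linarith

end

theorem covariance_wasserstein_bound_general {d : ℕ}
    (p q : Measure (EuclideanSpace ℝ (Fin d)))
    [IsProbabilityMeasure p] [IsProbabilityMeasure q]
    (hp : MemLp id 2 p) (hq : MemLp id 2 q)
    (η : ℝ) (hη : η < Real.sqrt (‖covMatrix p‖ / 2))
    (hW : W2 p q ≤ η) :
    ‖covMatrix p - covMatrix q‖ ≤
      (2 * Real.sqrt 2 * η * Real.sqrt ‖covMatrix p‖ + η ^ 2 * (Real.sqrt 2 + 1)) *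
        (Real.sqrt ‖covMatrix p‖ / (Real.sqrt ‖covMatrix p‖ - Real.sqrt 2 * η)) := by
  set s := √‖covMatrix p‖
  have hW0 := W2_nonneg p q
  have hs : 0 ≤ s := Real.sqrt_nonneg _
  have hη_nonneg : 0 ≤ η := hW0.trans hW
  have hsqrt2 : 1 ≤ √2 := Real.one_le_sqrt.mpr one_le_two
  have hgap : 0 < s - √2 * η := by
    rw [Real.sqrt_div' _ zero_le_two, lt_div_iff₀ (by positivity)] at hη
    linarith
  calc ‖covMatrix p - covMatrix q‖ ≤ 2 * s * W2 p q + W2 p q ^ 2 :=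
        norm_covMatrix_sub_le_of_W2 hp hq
    _ ≤ 2 * s * η + η ^ 2 := by gcongr
    _ ≤ (2 * √2 * η * s + η ^ 2 * (√2 + 1)) * 1 := by
      nlinarith [mul_nonneg (mul_nonneg hη_nonneg hs) (sub_nonneg.mpr hsqrt2),
        mul_nonneg (sq_nonneg η) (Real.sqrt_nonneg 2)]
    _ ≤ _ := by
      gcongr
      rw [le_div_iff₀ hgap]
      linarith [mul_nonneg (Real.sqrt_nonneg 2) hη_nonneg]

/-- If `W₂(p, p̃) ≤ η` with `0 < η < √(‖Σ‖/2)`, then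
`‖Σ − Σ̃‖ ≤ (2√2 η ‖Σ‖^{1/2} + η²(√2+1)) · ‖Σ‖^{1/2}/(‖Σ‖^{1/2} − √2 η)` (spectral norm). -/
theorem covariance_wasserstein_bound {d : ℕ}
    (p q : Measure (EuclideanSpace ℝ (Fin d)))
    [IsProbabilityMeasure p] [IsProbabilityMeasure q]
    (hp : MemLp id 2 p) (hq : MemLp id 2 q)
    (η : ℝ) (hη0 : 0 < η) (hη : η < Real.sqrt (‖covMatrix p‖ / 2))
    (hW : W2 p q ≤ η) :
    ‖covMatrix p - covMatrix q‖ ≤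
      (2 * Real.sqrt 2 * η * Real.sqrt ‖covMatrix p‖ + η ^ 2 * (Real.sqrt 2 + 1)) *
        (Real.sqrt ‖covMatrix p‖ / (Real.sqrt ‖covMatrix p‖ - Real.sqrt 2 * η)) :=
  covariance_wasserstein_bound_general p q hp hq η hη hW
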